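/- For parallel chords AB and CD of a circle of radius R bounding arcs AC and BD each of length γ (with both chords on the same side of the parallel diameter), the diameter of the closed tube T̄(AB, CD) — the set of all chords with one endpoint on arc AC and the other on arc BD, with the Hausdorff metric — equals 2R·sin(γ/(2R)). -/
import Mathlib


open Metric Real MeasureTheory
open scoped ENNReal NNReal

noncomputable section

/-- A chord of the circle of radius `R` centered at the origin in the plane `ℂ`. -/
def IsChord (R : ℝ) (s : Set ℂ) : Prop :=
  ∃ A B : ℂ, A ≠ B ∧ A ∈ Metric.sphere (0 : ℂ) R ∧ B ∈ Metric.sphere (0 : ℂ) R ∧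
    s = segment ℝ A B

/-- The space of chords of the circle of radius `R`, as nonempty compact subsets of the
plane, equipped (via the subtype instance) with the Hausdorff metric. -/
def Chords (R : ℝ) : Type :=
  { s : TopologicalSpace.NonemptyCompacts ℂ // IsChord R (s : Set ℂ) }

instance (R : ℝ) : MetricSpace (Chords R) := by unfold Chords; infer_instance

instance (R : ℝ) : MeasurableSpace (Chords R) := borel _

instance (R : ℝ) : BorelSpace (Chords R) := ⟨rfl⟩

/-- The point of the circle of radius `R` at angle `θ`. -/
def pt (R θ : ℝ) : ℂ := R * Complex.exp (θ * Complex.I)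


lemma pt_re (R θ : ℝ) : (pt R θ).re = R * Real.cos θ := by
  simp [pt, Complex.mul_re, Complex.exp_ofReal_mul_I_re, Complex.exp_ofReal_mul_I_im]

lemma pt_im (R θ : ℝ) : (pt R θ).im = R * Real.sin θ := by
  simp [pt, Complex.mul_im, Complex.exp_ofReal_mul_I_re, Complex.exp_ofReal_mul_I_im]

lemma dist_pt (R a b : ℝ) (hR : 0 ≤ R) :
    dist (pt R a) (pt R b) = 2 * R * |Real.sin ((a - b) / 2)| := by
  rw [Complex.dist_eq_re_im, pt_re, pt_re, pt_im, pt_im]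
  have key : (R * Real.cos a - R * Real.cos b) ^ 2 + (R * Real.sin a - R * Real.sin b) ^ 2
      = (2 * R * |Real.sin ((a - b) / 2)|) ^ 2 := by
    have h1 : |Real.sin ((a - b) / 2)| ^ 2 = Real.sin ((a - b) / 2) ^ 2 := sq_abs _
    have h2 : Real.sin ((a - b) / 2) ^ 2 = 1 / 2 - Real.cos (2 * ((a - b) / 2)) / 2 :=
      Real.sin_sq_eq_half_sub _
    have h2' : (2 : ℝ) * ((a - b) / 2) = a - b := by ring
    rw [h2'] at h2
    have h3 : Real.cos (a - b) = Real.cos a * Real.cos b + Real.sin a * Real.sin b :=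
      Real.cos_sub a b
    have pa := Real.sin_sq_add_cos_sq a
    have pb := Real.sin_sq_add_cos_sq b
    rw [mul_pow, mul_pow, h1, h2, h3]
    nlinarith [pa, pb]
  rw [key, Real.sqrt_sq (by positivity)]

lemma seg_compact (A B : ℂ) : IsCompact (segment ℝ A B) := by
  rw [segment_eq_image]
  exact isCompact_Icc.image (by fun_prop)

lemma haus_le {A B A' B' : ℂ} {c : ℝ} (hc : 0 ≤ c) (hA : dist A A' ≤ c) (hB : dist B B' ≤ c) :
    Metric.hausdorffDist (segment ℝ A B) (segment ℝ A' B') ≤ c := by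
  have main : ∀ (X Y X' Y' : ℂ), dist X X' ≤ c → dist Y Y' ≤ c →
      ∀ x ∈ segment ℝ X Y, ∃ y ∈ segment ℝ X' Y', dist x y ≤ c := by
    rintro X Y X' Y' hX hY x ⟨a, b, ha, hb, hab, rfl⟩
    refine ⟨a • X' + b • Y', ⟨a, b, ha, hb, hab, rfl⟩, ?_⟩
    have : a • X + b • Y - (a • X' + b • Y') = a • (X - X') + b • (Y - Y') := by
      module
    rw [dist_eq_norm, this]
    calc ‖a • (X - X') + b • (Y - Y')‖ ≤ ‖a • (X - X')‖ + ‖b • (Y - Y')‖ := norm_add_le _ _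
      _ = a * ‖X - X'‖ + b * ‖Y - Y'‖ := by
          rw [norm_smul, norm_smul, Real.norm_of_nonneg ha, Real.norm_of_nonneg hb]
      _ ≤ a * c + b * c := by
          gcongr <;> first
            | exact (dist_eq_norm X X' ▸ hX)
            | exact (dist_eq_norm Y Y' ▸ hY)
      _ = c := by rw [← add_mul, hab, one_mul]
  refine Metric.hausdorffDist_le_of_mem_dist hc (main A B A' B' hA hB) ?_
  intro y hy
  obtain ⟨x, hx, hxy⟩ := main A' B' A B (dist_comm A A' ▸ hA) (dist_comm B B' ▸ hB) y hy
  exact ⟨x, hx, dist_comm y x ▸ hxy⟩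
lemma abs_sin_le {x d : ℝ} (h : |x| ≤ d) (hd : d ≤ π / 2) : |Real.sin x| ≤ Real.sin d := by
  have hd0 : 0 ≤ d := le_trans (abs_nonneg x) h
  have hpi : (π : ℝ) / 2 ≤ π := by linarith [Real.pi_pos]
  have e1 : |Real.sin x| = Real.sin |x| := by
    rcases le_or_gt 0 x with hx | hx
    · rw [abs_of_nonneg hx]
      exact abs_of_nonneg (Real.sin_nonneg_of_nonneg_of_le_pi hx
        (le_trans (le_trans (le_abs_self x) (h.trans hd)) hpi))
    · rw [abs_of_neg hx, Real.sin_neg]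
      have h0 : 0 ≤ Real.sin (-x) := Real.sin_nonneg_of_nonneg_of_le_pi (by linarith)
        (le_trans (le_trans (neg_le_abs x) (h.trans hd)) hpi)
      rw [Real.sin_neg] at h0
      exact abs_of_nonpos (by linarith)
  rw [e1]
  exact Real.sin_le_sin_of_le_of_le_pi_div_two (le_trans (by linarith [Real.pi_pos]) (abs_nonneg x)) hd h


/-- The diameter of the closed tube between two parallel chords of a circle of radius
`R`, bounding arcs of length `γ` on each side, with both chords on the same side of the
parallel diameter, equals `2 R sin (γ/(2R))`.  The chords are `AB` with `A = pt R α`,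
`B = pt R (-α)` and `CD` with `C = pt R (α + γ/R)`, `D = pt R (-(α + γ/R))`; the tube
is the set of chords with one endpoint on arc `AC` and the other on arc `BD`. -/
theorem diam_closedTube (R γ α : ℝ) (hR : 0 < R) (hγ : 0 < γ) (hα : 0 < α)
    (hsame : α + γ / R ≤ π / 2) :
    Metric.diam {χ : Chords R |
        ∃ s ∈ Set.Icc α (α + γ / R), ∃ t ∈ Set.Icc (-(α + γ / R)) (-α),
          (χ.1 : Set ℂ) = segment ℝ (pt R s) (pt R t)} =
      2 * R * Real.sin (γ / (2 * R)) := by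
  set δ := γ / R with hδdef
  have hδ : 0 < δ := div_pos hγ hR
  have hpi := Real.pi_pos
  have hδ2 : δ ≤ π / 2 := by linarith
  have hhalf : γ / (2 * R) = δ / 2 := by rw [hδdef, div_div, mul_comm]
  rw [hhalf]
  set S := {χ : Chords R |
      ∃ s ∈ Set.Icc α (α + δ), ∃ t ∈ Set.Icc (-(α + δ)) (-α),
        (χ.1 : Set ℂ) = segment ℝ (pt R s) (pt R t)} with hSdef
  set c := 2 * R * Real.sin (δ / 2) with hcdef
  have hsin_nonneg : 0 ≤ Real.sin (δ / 2) :=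
    Real.sin_nonneg_of_nonneg_of_le_pi (by linarith) (by linarith)
  have hc0 : 0 ≤ c := by
    have : (0:ℝ) ≤ 2 * R := by linarith
    exact mul_nonneg this hsin_nonneg
  -- upper bound for distances of circle points
  have hpt_close : ∀ a b : ℝ, |a - b| ≤ δ → dist (pt R a) (pt R b) ≤ c := by
    intro a b hab
    rw [dist_pt R a b hR.le, hcdef]
    have h1 : |(a - b) / 2| ≤ δ / 2 := by
      rw [abs_div, abs_of_pos (by norm_num : (0:ℝ) < 2)]
      linarith
    have h2 : |Real.sin ((a - b) / 2)| ≤ Real.sin (δ / 2) := abs_sin_le h1 (by linarith)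
    have : (0:ℝ) ≤ 2 * R := by linarith
    exact mul_le_mul_of_nonneg_left h2 this
  -- dist on Chords is Hausdorff distance
  have hdist : ∀ χ χ' : Chords R, dist χ χ' = Metric.hausdorffDist (χ.1 : Set ℂ) (χ'.1 : Set ℂ) :=
    fun χ χ' => rfl
  have key_le : ∀ χ ∈ S, ∀ χ' ∈ S, dist χ χ' ≤ c := by
    rintro χ ⟨s, hs, t, ht, hχ⟩ χ' ⟨s', hs', t', ht', hχ'⟩
    rw [hdist, hχ, hχ']
    apply haus_le hc0
    · apply hpt_close
      rw [abs_le]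
      exact ⟨by linarith [hs.1, hs'.2], by linarith [hs.2, hs'.1]⟩
    · apply hpt_close
      rw [abs_le]
      exact ⟨by linarith [ht.1, ht'.2], by linarith [ht.2, ht'.1]⟩
  -- membership constructor
  have hsphere : ∀ θ : ℝ, pt R θ ∈ Metric.sphere (0 : ℂ) R := by
    intro θ
    rw [mem_sphere_zero_iff_norm]
    simp [pt, Complex.norm_exp_ofReal_mul_I, abs_of_pos hR]
  have hne : ∀ s t : ℝ, s ∈ Set.Icc α (α + δ) → t ∈ Set.Icc (-(α + δ)) (-α) →
      pt R s ≠ pt R t := by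
    intro s t hs ht h
    have hsin_s : 0 < Real.sin s :=
      Real.sin_pos_of_pos_of_lt_pi (by linarith [hs.1]) (by linarith [hs.2])
    have hsin_t : Real.sin t < 0 := by
      have h2 : 0 < Real.sin (-t) :=
        Real.sin_pos_of_pos_of_lt_pi (by linarith [ht.2]) (by linarith [ht.1])
      rw [Real.sin_neg] at h2; linarith
    have him : (pt R s).im = (pt R t).im := by rw [h]
    rw [pt_im, pt_im] at him
    nlinarith
  have mkmem : ∀ s t : ℝ, s ∈ Set.Icc α (α + δ) → t ∈ Set.Icc (-(α + δ)) (-α) →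
      ∃ χ : Chords R, χ ∈ S ∧ (χ.1 : Set ℂ) = segment ℝ (pt R s) (pt R t) := by
    intro s t hs ht
    refine ⟨⟨⟨⟨segment ℝ (pt R s) (pt R t), seg_compact _ _⟩,
        ⟨_, left_mem_segment ℝ _ _⟩⟩,
        pt R s, pt R t, hne s t hs ht, hsphere s, hsphere t, rfl⟩,
      ⟨s, hs, t, ht, rfl⟩, rfl⟩
  obtain ⟨χ1, hχ1S, hχ1⟩ := mkmem α (-α) ⟨le_refl _, by linarith⟩ ⟨by linarith, le_refl _⟩
  obtain ⟨χ2, hχ2S, hχ2⟩ := mkmem (α + δ) (-(α + δ)) ⟨by linarith, le_refl _⟩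
    ⟨le_refl _, by linarith⟩
  -- the key lower bound: every point of chord AB is far from C = pt R (α+δ)
  have hsinα : 0 ≤ Real.sin α := Real.sin_nonneg_of_nonneg_of_le_pi (by linarith) (by linarith)
  have hsin_mono : Real.sin α ≤ Real.sin (α + δ) :=
    Real.sin_le_sin_of_le_of_le_pi_div_two (by linarith) (by linarith) (by linarith)
  have hCA : dist (pt R (α + δ)) (pt R α) = c := by
    rw [dist_pt R _ _ hR.le, show (α + δ - α) / 2 = δ / 2 by ring, abs_of_nonneg hsin_nonneg]
  have claim : ∀ P ∈ segment ℝ (pt R α) (pt R (-α)), c ≤ dist (pt R (α + δ)) P := by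
    rintro P ⟨a, b, ha, hb, hab, rfl⟩
    have hre : (a • pt R α + b • pt R (-α)).re = R * Real.cos α := by
      simp only [Complex.add_re, Complex.smul_re, pt_re, Real.cos_neg, smul_eq_mul]
      rw [← add_mul, hab, one_mul]
    have him : (a • pt R α + b • pt R (-α)).im = (a - b) * (R * Real.sin α) := by
      simp only [Complex.add_im, Complex.smul_im, pt_im, Real.sin_neg, smul_eq_mul]
      ring
    have himle : (a • pt R α + b • pt R (-α)).im ≤ R * Real.sin α := by
      rw [him]
      nlinarith [mul_nonneg hR.le hsinα]
    rw [← hCA, Complex.dist_eq_re_im, Complex.dist_eq_re_im, pt_re, pt_im, pt_re, pt_im,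
      hre, him]
    apply Real.sqrt_le_sqrt
    have h1 : 0 ≤ R * Real.sin (α + δ) - R * Real.sin α := by nlinarith
    have h2 : R * Real.sin (α + δ) - R * Real.sin α ≤
        R * Real.sin (α + δ) - (a - b) * (R * Real.sin α) := by
      rw [him] at himle; linarith
    nlinarith [sq_nonneg (R * Real.cos (α + δ) - R * Real.cos α)]
  -- lower bound on the Hausdorff distance
  have hlow : c ≤ dist χ2 χ1 := by
    rw [hdist, hχ2, hχ1]
    by_contra hcon
    push_neg at hcon
    have fin : EMetric.hausdorffEdist (segment ℝ (pt R (α + δ)) (pt R (-(α + δ))))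
        (segment ℝ (pt R α) (pt R (-α))) ≠ ⊤ :=
      Metric.hausdorffEdist_ne_top_of_nonempty_of_bounded
        ⟨_, left_mem_segment ℝ _ _⟩ ⟨_, left_mem_segment ℝ _ _⟩
        (seg_compact _ _).isBounded (seg_compact _ _).isBounded
    obtain ⟨y, hy, hdy⟩ := Metric.exists_dist_lt_of_hausdorffDist_lt
      (left_mem_segment ℝ (pt R (α + δ)) (pt R (-(α + δ)))) hcon fin
    exact absurd hdy (not_lt.2 (claim y hy))
  have hboundS : Bornology.IsBounded S := by
    rcases Set.eq_empty_or_nonempty S with h | ⟨x0, hx0⟩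
    · simp [h]
    · apply Metric.isBounded_iff.2 ⟨c, fun {x} hx {y} hy => key_le x hx y hy⟩
  refine le_antisymm (Metric.diam_le_of_forall_dist_le hc0 key_le) ?_
  calc c ≤ dist χ2 χ1 := hlow
    _ ≤ Metric.diam S := Metric.dist_le_diam_of_mem hboundS hχ2S hχ1S
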